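/- arXiv:1907.00833 — 7 statements merged into one kernel-verified Lean document; each statement's English description precedes it below -/
import Mathlib

section
/- Let L > 0 and let ω > 0 satisfy ω ≤ 1/(2L). Then for every continuously differentiable, mean-value free h : [0,L] → ℝ one has ∫₀^L h'(x)² dx − ω·h(0)² − ω·h(L)² ≥ (1/L − 2ω)·sup_{t∈[0,L]}|h(t)|² ≥ 0. -/
/-!
A mean-value free continuous function vanishes somewhere in `[0, L]`, so by the fundamental
theorem of calculus and Cauchy–Schwarz every value satisfies `|h t|² ≤ (∫₀^L |h'|)² ≤ L ∫₀^L h'²`.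
Bounding both boundary terms `h(0)², h(L)²` by `sup |h|²` then leaves `(1/L − 2ω) sup |h|²`,
which is nonnegative exactly when `ω ≤ 1/(2L)`.
-/

open Set intervalIntegral
open MeasureTheory (volume ae_of_all)

theorem exists_mem_Ioo_eq_zero_of_integral_eq_zero {f : ℝ → ℝ} {a b : ℝ} (hab : a < b)
    (hf : ContinuousOn f (Icc a b)) (h0 : ∫ x in a..b, f x = 0) :
    ∃ c ∈ Ioo a b, f c = 0 := by
  obtain ⟨c, hc, hfc⟩ := exists_eq_interval_average hab.ne (by rwa [uIcc_of_le hab.le])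
  rw [uIoo_of_le hab.le] at hc
  exact ⟨c, hc, by rw [hfc, interval_average_eq_div, h0, zero_div]⟩

theorem sq_integral_abs_le_mul_integral_sq {f : ℝ → ℝ} {a b : ℝ} (hab : a ≤ b)
    (hf : IntervalIntegrable f volume a b)
    (hf2 : IntervalIntegrable (fun x => f x ^ 2) volume a b) :
    (∫ x in a..b, |f x|) ^ 2 ≤ (b - a) * ∫ x in a..b, f x ^ 2 := by
  rcases hab.eq_or_lt with rfl | hlt
  · simp
  set J := ∫ x in a..b, |f x|
  set I := ∫ x in a..b, f x ^ 2
  set m := J / (b - a)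
  -- AM-GM `2 m |f| ≤ f² + m²` with `m` the mean of `|f|`
  have amgm : 2 * m * J ≤ I + (b - a) * m ^ 2 := by
    have := integral_mono_on (g := fun x => f x ^ 2 + m ^ 2) hab (hf.abs.const_mul (2 * m)) (hf2.add intervalIntegrable_const)
      fun x _ => by nlinarith [sq_nonneg (|f x| - m), sq_abs (f x)]
    rwa [integral_const_mul, integral_add hf2 intervalIntegrable_const, integral_const,
      smul_eq_mul] at this
  have hJ : J = m * (b - a) := by
    simp only [m]
    field_simp [(sub_pos.2 hlt).ne']
  have hmJ : m * J ≤ I := by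
    have : m * J = (b - a) * m ^ 2 := by rw [hJ]; ring
    linarith
  calc J ^ 2 = (b - a) * (m * J) := by rw [sq, hJ]; ring
    _ ≤ (b - a) * I := mul_le_mul_of_nonneg_left hmJ (sub_nonneg.2 hab)

theorem abs_sub_le_integral_abs_deriv {h h' : ℝ → ℝ} {a b s t : ℝ}
    (hderiv : ∀ x ∈ Icc a b, HasDerivWithinAt h (h' x) (Icc a b) x)
    (hint : IntervalIntegrable h' volume a b) (hs : s ∈ Icc a b) (ht : t ∈ Icc a b) :
    |h t - h s| ≤ ∫ x in a..b, |h' x| := by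
  wlog hst : s ≤ t generalizing s t
  · rw [abs_sub_comm]
    exact this ht hs (le_of_not_ge hst)
  have hsub : Icc s t ⊆ Icc a b := Icc_subset_Icc hs.1 ht.2
  have ftc : ∫ x in s..t, h' x = h t - h s :=
    integral_eq_sub_of_hasDerivAt_of_le hst
      (fun x hx => (hderiv x (hsub hx)).continuousWithinAt.mono hsub)
      (fun x hx => (hderiv x (hsub (Ioo_subset_Icc_self hx))).hasDerivAt
        (Icc_mem_nhds (hs.1.trans_lt hx.1) (hx.2.trans_le ht.2)))
      (hint.mono_set (by rwa [uIcc_of_le hst, uIcc_of_le (hs.1.trans hs.2)]))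
  calc |h t - h s| = |∫ x in s..t, h' x| := by rw [ftc]
    _ ≤ ∫ x in s..t, |h' x| := abs_integral_le_integral_abs hst
    _ ≤ ∫ x in a..b, |h' x| :=
      integral_mono_interval hs.1 hst ht.2 (ae_of_all _ fun _ => abs_nonneg _) hint.abs

theorem sq_abs_le_mul_integral_sq_deriv_of_eq_zero {h h' : ℝ → ℝ} {a b c t : ℝ}
    (hderiv : ∀ x ∈ Icc a b, HasDerivWithinAt h (h' x) (Icc a b) x)
    (hcont : ContinuousOn h' (Icc a b)) (hc : c ∈ Icc a b) (hc0 : h c = 0)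
    (ht : t ∈ Icc a b) :
    |h t| ^ 2 ≤ (b - a) * ∫ x in a..b, h' x ^ 2 := by
  have hab : a ≤ b := hc.1.trans hc.2
  calc |h t| ^ 2 = |h t - h c| ^ 2 := by rw [hc0, sub_zero]
    _ ≤ (∫ x in a..b, |h' x|) ^ 2 := by
      gcongr
      exact abs_sub_le_integral_abs_deriv hderiv (hcont.intervalIntegrable_of_Icc hab) hc ht
    _ ≤ (b - a) * ∫ x in a..b, h' x ^ 2 :=
      sq_integral_abs_le_mul_integral_sq hab (hcont.intervalIntegrable_of_Icc hab)
        ((hcont.pow 2).intervalIntegrable_of_Icc hab)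

/-- Key stability estimate of Theorem 4.2(3): for `0 < ω ≤ 1/(2L)` and any continuously
differentiable mean-value free `h : [0,L] → ℝ`,
`∫₀^L h'² − ω h(0)² − ω h(L)² ≥ (1/L − 2ω)·sup |h|² ≥ 0`. -/
theorem stability_estimate_short_interval (L ω : ℝ) (hL : 0 < L) (hω : 0 < ω)
    (hωL : ω ≤ 1 / (2 * L)) (h h' : ℝ → ℝ)
    (hderiv : ∀ x ∈ Icc (0:ℝ) L, HasDerivWithinAt h (h' x) (Icc (0:ℝ) L) x)
    (hcont : ContinuousOn h' (Icc (0:ℝ) L))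
    (hmean : (∫ x in (0:ℝ)..L, h x) = 0) :
    (∫ x in (0:ℝ)..L, (h' x) ^ 2) - ω * (h 0) ^ 2 - ω * (h L) ^ 2
      ≥ (1 / L - 2 * ω) * sSup ((fun t => |h t| ^ 2) '' Icc (0:ℝ) L) ∧
    (1 / L - 2 * ω) * sSup ((fun t => |h t| ^ 2) '' Icc (0:ℝ) L) ≥ 0 := by
  obtain ⟨c, hc, hc0⟩ := exists_mem_Ioo_eq_zero_of_integral_eq_zero hL
    (fun x hx => (hderiv x hx).continuousWithinAt) hmean
  have hbound : ∀ t ∈ Icc (0:ℝ) L, |h t| ^ 2 ≤ L * ∫ x in (0:ℝ)..L, h' x ^ 2 := fun t ht => by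
    simpa using sq_abs_le_mul_integral_sq_deriv_of_eq_zero hderiv hcont
      (Ioo_subset_Icc_self hc) hc0 ht
  set S := sSup ((fun t => |h t| ^ 2) '' Icc (0:ℝ) L)
  have hbdd : BddAbove ((fun t => |h t| ^ 2) '' Icc (0:ℝ) L) :=
    ⟨_, forall_mem_image.2 hbound⟩
  have hS : L⁻¹ * S ≤ ∫ x in (0:ℝ)..L, h' x ^ 2 := by
    rw [inv_mul_le_iff₀ hL]
    exact csSup_le ((nonempty_Icc.2 hL.le).image _) (forall_mem_image.2 hbound)
  have h0S : h 0 ^ 2 ≤ S := by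
    rw [← sq_abs]
    exact le_csSup hbdd (mem_image_of_mem _ (left_mem_Icc.2 hL.le))
  have hLS : h L ^ 2 ≤ S := by
    rw [← sq_abs]
    exact le_csSup hbdd (mem_image_of_mem _ (right_mem_Icc.2 hL.le))
  have hcoef : 0 ≤ 1 / L - 2 * ω := by
    rw [le_div_iff₀ (by positivity)] at hωL
    rw [sub_nonneg, le_div_iff₀ hL]
    linarith
  refine ⟨?_, mul_nonneg hcoef ((sq_nonneg _).trans h0S)⟩
  rw [ge_iff_le, one_div, sub_mul]
  linarith [mul_le_mul_of_nonneg_left h0S hω.le, mul_le_mul_of_nonneg_left hLS hω.le]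
end

section
/- Let L > 0 and ω > 2/L. Then there exists a Lipschitz continuous function g : [0,L] → ℝ, differentiable on (0,L) except at finitely many points, with ∫₀^L g(σ) dσ = 0, g(0) = 1, g(L) = −1, one-sided derivatives g'(0⁺) = −ω·g(0) and g'(L⁻) = ω·g(L), such that ∫₀^L g'(σ)² dσ − ω·g(0)² − ω·g(L)² < 0. -/
open Set intervalIntegral

/-- Claim (4.14): if `ω > 2/L` there is a mean-value free Lipschitz test function `g` on `[0,L]`
with `g(0) = 1`, `g(L) = −1`, satisfying the linearized Robin boundary conditions, such that
`∫₀^L g'² − ω g(0)² − ω g(L)² < 0`. -/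
theorem negative_quadratic_form_flat (L ω : ℝ) (hL : 0 < L) (hω : 2 / L < ω) :
    ∃ g : ℝ → ℝ, ∃ S : Finset ℝ,
      (∃ K : NNReal, LipschitzOnWith K g (Icc (0:ℝ) L)) ∧
      (∀ σ ∈ Ioo (0:ℝ) L, σ ∉ S → DifferentiableAt ℝ g σ) ∧
      (∫ σ in (0:ℝ)..L, g σ) = 0 ∧ g 0 = 1 ∧ g L = -1 ∧
      HasDerivWithinAt g (-(ω * g 0)) (Ici (0:ℝ)) 0 ∧
      HasDerivWithinAt g (ω * g L) (Iic L) L ∧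
      (∫ σ in (0:ℝ)..L, (deriv g σ) ^ 2) - ω * (g 0) ^ 2 - ω * (g L) ^ 2 < 0 := by
  have hω0 : 0 < ω := lt_trans (div_pos two_pos hL) hω
  set h : ℝ := L / 2 with hhdef
  have hh : 0 < h := by positivity
  have hωh : 1 < ω * h := by
    have : 2 < ω * L := (div_lt_iff₀ hL).mp hω
    simp only [hhdef]; linarith
  -- the function whose zero gives the right frequency
  set F : ℝ → ℝ := fun k => k * Real.cosh (k * h) - ω * Real.sinh (k * h) with hFdef
  set k₁ : ℝ := Real.log (ω * h) / (2 * h) with hk₁def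
  have hlogpos : 0 < Real.log (ω * h) := Real.log_pos hωh
  have hk₁pos : 0 < k₁ := by positivity
  have hk₁h : k₁ * h = Real.log (ω * h) / 2 := by
    rw [hk₁def, div_mul_eq_mul_div, mul_comm 2 h, ← div_div, mul_div_cancel_right₀ _ hh.ne']
  have hexp : Real.exp (k₁ * h) < ω * h := by
    have h1 : 1 < Real.exp (k₁ * h) := by
      have := Real.add_one_le_exp (k₁ * h)
      have hp : 0 < k₁ * h := by positivity
      linarith
    have h2 : Real.exp (k₁ * h) * Real.exp (k₁ * h) = ω * h := by
      rw [← Real.exp_add, hk₁h]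
      rw [show Real.log (ω * h) / 2 + Real.log (ω * h) / 2 = Real.log (ω * h) by ring]
      exact Real.exp_log (by positivity)
    nlinarith
  have hcosh_le_exp : ∀ x : ℝ, 0 ≤ x → Real.cosh x ≤ Real.exp x := by
    intro x hx
    rw [Real.cosh_eq]
    have : Real.exp (-x) ≤ Real.exp x := Real.exp_le_exp.2 (by linarith)
    linarith
  have hFk₁ : F k₁ < 0 := by
    have h1 : Real.cosh (k₁ * h) < ω * h :=
      lt_of_le_of_lt (hcosh_le_exp _ (by positivity)) hexp
    have h2 : k₁ * h < Real.sinh (k₁ * h) := Real.self_lt_sinh_iff.2 (by positivity)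
    simp only [hFdef]
    have : k₁ * Real.cosh (k₁ * h) < k₁ * (ω * h) := by
      exact (mul_lt_mul_iff_right₀ hk₁pos).2 h1
    nlinarith
  have hFω : 0 < F ω := by
    simp only [hFdef]
    have : ω * Real.cosh (ω * h) - ω * Real.sinh (ω * h)
        = ω * Real.exp (-(ω * h)) := by
      rw [← mul_sub, Real.cosh_sub_sinh]
    rw [this]; positivity
  have hk₁ω : k₁ ≤ ω := by
    have hlog : Real.log (ω * h) ≤ ω * h - 1 := Real.log_le_sub_one_of_pos (by positivity)
    have : k₁ ≤ (ω * h - 1) / (2 * h) := by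
      apply div_le_div_of_nonneg_right ?_ (by positivity) |>.trans_eq rfl
      exact hlog
    have h2 : (ω * h - 1) / (2 * h) ≤ ω := by
      rw [div_le_iff₀ (by positivity)]; nlinarith
    linarith
  have hcontF : ContinuousOn F (Icc k₁ ω) := by
    apply Continuous.continuousOn; simp only [hFdef]; fun_prop
  obtain ⟨k, hkmem, hFk⟩ : ∃ k ∈ Icc k₁ ω, F k = 0 := by
    have hsub := intermediate_value_Icc hk₁ω hcontF
    have h0 : (0 : ℝ) ∈ Icc (F k₁) (F ω) := ⟨le_of_lt hFk₁, le_of_lt hFω⟩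
    obtain ⟨k, hk, hFk⟩ := hsub h0
    exact ⟨k, hk, hFk⟩
  have hk0 : 0 < k := lt_of_lt_of_le hk₁pos hkmem.1
  have hrel : k * Real.cosh (k * h) = ω * Real.sinh (k * h) := by
    have := hFk; simp only [hFdef] at this; linarith
  set s : ℝ := Real.sinh (k * h) with hsdef
  set C : ℝ := Real.cosh (k * h) with hCdef
  have hs : 0 < s := Real.sinh_pos_iff.2 (by positivity)
  have hC1 : 1 ≤ C := Real.one_le_cosh _
  have hC0 : 0 < C := lt_of_lt_of_le one_pos hC1
  set c : ℝ := s⁻¹ with hcdef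
  have hc0 : 0 < c := by positivity
  have hcs : c * s = 1 := inv_mul_cancel₀ hs.ne'
  set g : ℝ → ℝ := fun σ => c * Real.sinh (k * (h - σ)) with hgdef
  -- derivative everywhere
  have hinner : ∀ σ : ℝ, HasDerivAt (fun x : ℝ => k * (h - x)) (k * (-1)) σ := by
    intro σ
    exact ((hasDerivAt_id σ).const_sub h).const_mul k
  have hg' : ∀ σ : ℝ, HasDerivAt g (-(c * k * Real.cosh (k * (h - σ)))) σ := by
    intro σ
    have h2 := (Real.hasDerivAt_sinh (k * (h - σ))).comp σ (hinner σ)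
    have h3 := h2.const_mul c
    refine h3.congr_deriv ?_
    ring
  have hderiv : ∀ σ : ℝ, deriv g σ = -(c * k * Real.cosh (k * (h - σ))) :=
    fun σ => (hg' σ).deriv
  have hcontg : Continuous g := by simp only [hgdef]; fun_prop
  have hhL : h - L = -h := by simp only [hhdef]; ring
  have hg0 : g 0 = 1 := by
    simp only [hgdef, sub_zero]; exact hcs
  have hgL : g L = -1 := by
    simp only [hgdef, hhL]
    rw [show k * (-h) = -(k * h) by ring, Real.sinh_neg]
    rw [← hsdef]; rw [mul_neg, hcs]
  have hckC : c * k * C = ω := by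
    have : c * (k * C) = c * (ω * s) := by rw [hCdef, hsdef, hrel]
    calc c * k * C = c * (k * C) := by ring
      _ = c * (ω * s) := this
      _ = ω * (c * s) := by ring
      _ = ω := by rw [hcs, mul_one]
  refine ⟨g, ∅, ?_, ?_, ?_, hg0, hgL, ?_, ?_, ?_⟩
  · -- Lipschitz
    refine ⟨‖c * k * C‖₊, Convex.lipschitzOnWith_of_nnnorm_deriv_le
      (fun x _ => (hg' x).differentiableAt) ?_ (convex_Icc 0 L)⟩
    intro x hx
    rw [← NNReal.coe_le_coe, coe_nnnorm, coe_nnnorm, Real.norm_eq_abs, Real.norm_eq_abs,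
      hderiv x, abs_neg]
    have hxmem : |k * (h - x)| ≤ |k * h| := by
      rw [abs_mul, abs_mul]
      apply mul_le_mul_of_nonneg_left _ (abs_nonneg k)
      rw [abs_le]
      constructor
      · rw [abs_of_pos hh]
        have := hx.2; simp only [hhdef]; simp only [hhdef] at *; linarith [hx.2]
      · rw [abs_of_pos hh]; linarith [hx.1]
    have hcle : Real.cosh (k * (h - x)) ≤ C := by
      rw [hCdef]; exact Real.cosh_le_cosh.2 hxmem
    rw [abs_mul, abs_mul, abs_mul, abs_mul]
    have h1 : |Real.cosh (k * (h - x))| ≤ |C| := by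
      rw [abs_of_pos (Real.cosh_pos _), abs_of_pos hC0]; exact hcle
    apply mul_le_mul_of_nonneg_left h1 (by positivity)
  · intro σ _ _; exact (hg' σ).differentiableAt
  · -- mean value zero
    set G : ℝ → ℝ := fun σ => -(c / k) * Real.cosh (k * (h - σ)) with hGdef
    have hG : ∀ σ : ℝ, HasDerivAt G (g σ) σ := by
      intro σ
      have h2 := (Real.hasDerivAt_cosh (k * (h - σ))).comp σ (hinner σ)
      have h3 := h2.const_mul (-(c / k))
      refine h3.congr_deriv ?_
      simp only [hgdef]
      field_simp
    rw [intervalIntegral.integral_eq_sub_of_hasDerivAt (fun σ _ => hG σ)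
      (hcontg.intervalIntegrable 0 L)]
    simp only [hGdef, sub_zero, hhL]
    rw [show k * (-h) = -(k * h) by ring, Real.cosh_neg]
    ring
  · -- Robin at 0
    have := (hg' 0).hasDerivWithinAt (s := Ici (0:ℝ))
    refine this.congr_deriv ?_
    rw [hg0, mul_one, sub_zero, ← hCdef, hckC]
  · -- Robin at L
    have := (hg' L).hasDerivWithinAt (s := Iic L)
    refine this.congr_deriv ?_
    rw [hgL, hhL, show k * (-h) = -(k * h) by ring, Real.cosh_neg, ← hCdef, hckC]
    ring
  · -- the energy inequality
    have hint : (∫ σ in (0:ℝ)..L, (deriv g σ) ^ 2) = k ^ 2 * h / s ^ 2 + k * C / s := by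
      have hEq : ∀ σ : ℝ, (deriv g σ) ^ 2 = (-(c * k * Real.cosh (k * (h - σ)))) ^ 2 :=
        fun σ => by rw [hderiv σ]
      rw [intervalIntegral.integral_congr (g := fun σ => (-(c * k * Real.cosh (k * (h - σ)))) ^ 2)
        (fun σ _ => hEq σ)]
      set H : ℝ → ℝ := fun σ =>
        (c * k) ^ 2 * (σ / 2 - Real.sinh (2 * (k * (h - σ))) / (4 * k)) with hHdef
      have hH : ∀ σ : ℝ, HasDerivAt H ((-(c * k * Real.cosh (k * (h - σ)))) ^ 2) σ := by
        intro σ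
        have ha : HasDerivAt (fun x : ℝ => 2 * (k * (h - x))) (2 * (k * (-1))) σ :=
          (hinner σ).const_mul 2
        have hb := (Real.hasDerivAt_sinh (2 * (k * (h - σ)))).comp σ ha
        have hcm := hb.div_const (4 * k)
        have he := ((hasDerivAt_id σ).div_const 2).sub hcm
        have hfm := he.const_mul ((c * k) ^ 2)
        refine hfm.congr_deriv ?_
        have hc2 : Real.cosh (2 * (k * (h - σ))) = 2 * Real.cosh (k * (h - σ)) ^ 2 - 1 := by
          rw [Real.cosh_two_mul, Real.cosh_sq]; ring
        rw [hc2]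
        field_simp
        ring
      have hcontI : Continuous fun σ : ℝ => (-(c * k * Real.cosh (k * (h - σ)))) ^ 2 := by
        fun_prop
      rw [intervalIntegral.integral_eq_sub_of_hasDerivAt (fun σ _ => hH σ)
        (hcontI.intervalIntegrable 0 L)]
      simp only [hHdef, hhL, sub_zero]
      rw [show 2 * (k * -h) = -(2 * (k * h)) by ring, Real.sinh_neg,
        Real.sinh_two_mul, ← hsdef, ← hCdef]
      have hLh : L = 2 * h := by simp only [hhdef]; ring
      rw [hLh]
      field_simp [hcdef]
      linear_combination 8 * (k * h + s * C) * (c * s + 1) * hcs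
    rw [hint, hg0, hgL]
    have hkh_lt_s : k * h < s := by
      rw [hsdef]; exact Real.self_lt_sinh_iff.2 (by positivity)
    have hterm2 : k * C / s = ω := by
      rw [div_eq_iff hs.ne']; exact hrel
    rw [hterm2]
    have hmain : k ^ 2 * h / s ^ 2 < ω := by
      rw [div_lt_iff₀ (by positivity)]
      have h1 : ω * s ^ 2 = k * C * s := by rw [hrel]; ring
      rw [h1]
      have h2 : k * s ≤ k * C * s := by
        have := mul_le_mul_of_nonneg_left hC1 hk0.le
        have := mul_le_mul_of_nonneg_right this hs.le
        calc k * s = k * 1 * s := by ring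
          _ ≤ k * C * s := this
      have h3 : k * (k * h) < k * s := (mul_lt_mul_iff_right₀ hk0).2 hkh_lt_s
      calc k ^ 2 * h = k * (k * h) := by ring
        _ < k * s := h3
        _ ≤ k * C * s := h2
    have hsq1 : ((1:ℝ)) ^ 2 = 1 := by norm_num
    have hsq2 : ((-1:ℝ)) ^ 2 = 1 := by norm_num
    rw [hsq1, hsq2]
    linarith
end

section
/- Let L > 0, ω₁, ω₂ < 0 and c₁ ∈ ℝ, and define h₁ : [0,L] → ℝ by h₁(x) = c₁·[ (L − ω₂L²/2)·(1 − ω₁x)/(ω₁ + ω₂ − ω₁ω₂L) + x²/2 ]. Then ∫₀^L h₁(x) dx = c₁·(6L² + ω₁ω₂L⁴/2 − 2(ω₁ + ω₂)L³) / (6·(ω₁ + ω₂ − ω₁ω₂L)). Moreover 6L² + ω₁ω₂L⁴/2 − 2(ω₁ + ω₂)L³ > 0, so this integral vanishes if and only if c₁ = 0. -/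
open Set intervalIntegral

/-- The semi-simplicity computation in Theorem 4.1: for `ω₁, ω₂ < 0`, the kernel function
`h₁(x) = c₁ [ (L − ω₂L²/2)(1 − ω₁x)/(ω₁ + ω₂ − ω₁ω₂L) + x²/2 ]` has
`∫₀^L h₁ = c₁ (6L² + ω₁ω₂L⁴/2 − 2(ω₁ + ω₂)L³)/(6(ω₁ + ω₂ − ω₁ω₂L))`, the numerator factor
is positive, and the integral vanishes iff `c₁ = 0`. -/
theorem kernel_integral_vanishes_iff (L ω₁ ω₂ c₁ : ℝ) (hL : 0 < L)
    (h1 : ω₁ < 0) (h2 : ω₂ < 0) (h₁fun : ℝ → ℝ)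
    (hdef : ∀ x : ℝ, h₁fun x
      = c₁ * ((L - ω₂ * L ^ 2 / 2) * (1 - ω₁ * x) / (ω₁ + ω₂ - ω₁ * ω₂ * L) + x ^ 2 / 2)) :
    (∫ x in (0:ℝ)..L, h₁fun x)
      = c₁ * (6 * L ^ 2 + ω₁ * ω₂ * L ^ 4 / 2 - 2 * (ω₁ + ω₂) * L ^ 3)
        / (6 * (ω₁ + ω₂ - ω₁ * ω₂ * L)) ∧
    6 * L ^ 2 + ω₁ * ω₂ * L ^ 4 / 2 - 2 * (ω₁ + ω₂) * L ^ 3 > 0 ∧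
    ((∫ x in (0:ℝ)..L, h₁fun x) = 0 ↔ c₁ = 0) := by
  have hD : ω₁ + ω₂ - ω₁ * ω₂ * L < 0 := by
    nlinarith [mul_pos (mul_pos (neg_pos.2 h1) (neg_pos.2 h2)) hL]
  have hD' : ω₁ + ω₂ - ω₁ * ω₂ * L ≠ 0 := ne_of_lt hD
  set a : ℝ := c₁ * ((L - ω₂ * L ^ 2 / 2) / (ω₁ + ω₂ - ω₁ * ω₂ * L)) with ha
  set b : ℝ := -(c₁ * (L - ω₂ * L ^ 2 / 2) * ω₁ / (ω₁ + ω₂ - ω₁ * ω₂ * L)) with hb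
  have key : (∫ x in (0:ℝ)..L, h₁fun x) = a * L + b * (L ^ 2 / 2) + c₁ / 2 * (L ^ 3 / 3) := by
    have hfun : ∀ x : ℝ, h₁fun x = a + b * x + c₁ / 2 * x ^ 2 := by
      intro x
      rw [hdef x, ha, hb]
      field_simp
      ring
    have i1 : IntervalIntegrable (fun _ : ℝ => a) MeasureTheory.volume 0 L :=
      intervalIntegrable_const
    have i2 : IntervalIntegrable (fun x : ℝ => b * x) MeasureTheory.volume 0 L :=
      (continuous_const.mul continuous_id).intervalIntegrable 0 L
    have i3 : IntervalIntegrable (fun x : ℝ => c₁ / 2 * x ^ 2) MeasureTheory.volume 0 L :=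
      (continuous_const.mul (continuous_pow 2)).intervalIntegrable 0 L
    calc (∫ x in (0:ℝ)..L, h₁fun x)
        = ∫ x in (0:ℝ)..L, (a + b * x + c₁ / 2 * x ^ 2) := by
          apply intervalIntegral.integral_congr
          intro x _
          exact hfun x
      _ = (∫ x in (0:ℝ)..L, (a + b * x)) + ∫ x in (0:ℝ)..L, c₁ / 2 * x ^ 2 := by
          exact intervalIntegral.integral_add (i1.add i2) i3
      _ = ((∫ x in (0:ℝ)..L, a) + ∫ x in (0:ℝ)..L, b * x)
            + ∫ x in (0:ℝ)..L, c₁ / 2 * x ^ 2 := by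
          rw [intervalIntegral.integral_add i1 i2]
      _ = a * L + b * (L ^ 2 / 2) + c₁ / 2 * (L ^ 3 / 3) := by
          rw [intervalIntegral.integral_const, intervalIntegral.integral_const_mul,
            intervalIntegral.integral_const_mul, _root_.integral_id, _root_.integral_pow]
          simp only [smul_eq_mul]
          push_cast
          ring
  have hval : (∫ x in (0:ℝ)..L, h₁fun x)
      = c₁ * (6 * L ^ 2 + ω₁ * ω₂ * L ^ 4 / 2 - 2 * (ω₁ + ω₂) * L ^ 3)
        / (6 * (ω₁ + ω₂ - ω₁ * ω₂ * L)) := by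
    rw [key, ha, hb]
    field_simp [show ω₁ + ω₂ - L * ω₂ * ω₁ ≠ 0 by contrapose! hD'; linarith]
    ring
  have hpos : 6 * L ^ 2 + ω₁ * ω₂ * L ^ 4 / 2 - 2 * (ω₁ + ω₂) * L ^ 3 > 0 := by
    nlinarith [mul_pos (mul_pos (neg_pos.2 h1) (neg_pos.2 h2)) (pow_pos hL 4),
      mul_pos (neg_pos.2 h1) (pow_pos hL 3), mul_pos (neg_pos.2 h2) (pow_pos hL 3),
      pow_pos hL 2]
  refine ⟨hval, hpos, ?_⟩
  rw [hval]
  rw [div_eq_zero_iff]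
  constructor
  · rintro (h | h)
    · rcases mul_eq_zero.1 h with h' | h'
      · exact h'
      · exact absurd h' (ne_of_gt hpos)
    · exact absurd h (mul_ne_zero (by norm_num) hD')
  · intro h; left; rw [h]; ring
end

section
/- Let L > 0 and ω₁, ω₂ < 0. If h : [0,L] → ℝ is twice continuously differentiable, h'' is constant on [0,L], h'(0) = −ω₁·h(0), h'(L) = ω₂·h(L), and ∫₀^L h(x) dx = 0, then h is identically zero. -/
open Set intervalIntegral

/-- A function on a convex set with derivative zero is constant. -/
lemma const_of_deriv_zero {f : ℝ → ℝ} {L : ℝ} (hL : 0 < L)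
    (hf : ∀ x ∈ Icc (0:ℝ) L, HasDerivWithinAt f 0 (Icc (0:ℝ) L) x) :
    ∀ x ∈ Icc (0:ℝ) L, f x = f 0 := by
  intro x hx
  have h0 : (0:ℝ) ∈ Icc (0:ℝ) L := ⟨le_refl _, hL.le⟩
  have := Convex.norm_image_sub_le_of_norm_hasDerivWithin_le (f' := fun _ => 0) (C := 0)
    hf (fun x _ => by norm_num) (convex_Icc 0 L) h0 hx
  have : ‖f x - f 0‖ ≤ 0 := by simpa using this
  have : f x - f 0 = 0 := by
    have := norm_nonneg (f x - f 0)
    have := norm_eq_zero.mp (le_antisymm ‹‖f x - f 0‖ ≤ 0› this)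
    exact this
  linarith [this]

/-- Content of `N(A) = N(A²)` in Theorem 4.1: for `ω₁, ω₂ < 0`, a twice continuously
differentiable `h : [0,L] → ℝ` with constant second derivative, Robin boundary conditions
`h'(0) = −ω₁h(0)`, `h'(L) = ω₂h(L)`, and zero mean is identically zero. -/
theorem kernel_meets_meanfree_trivially (L ω₁ ω₂ c : ℝ) (hL : 0 < L)
    (h1 : ω₁ < 0) (h2 : ω₂ < 0) (h h' : ℝ → ℝ)
    (hd1 : ∀ s ∈ Icc (0:ℝ) L, HasDerivWithinAt h (h' s) (Icc (0:ℝ) L) s)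
    (hd2 : ∀ s ∈ Icc (0:ℝ) L, HasDerivWithinAt h' c (Icc (0:ℝ) L) s)
    (hb0 : h' 0 = -ω₁ * h 0) (hbL : h' L = ω₂ * h L)
    (hmean : (∫ x in (0:ℝ)..L, h x) = 0) :
    ∀ s ∈ Icc (0:ℝ) L, h s = 0 := by
  set a := h 0 with ha_def
  set b := h' 0 with hb_def
  -- Step 1: h' s = b + c * s on Icc
  have h'eq : ∀ s ∈ Icc (0:ℝ) L, h' s = b + c * s := by
    have key : ∀ x ∈ Icc (0:ℝ) L,
        HasDerivWithinAt (fun s => h' s - (b + c * s)) 0 (Icc (0:ℝ) L) x := by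
      intro x hx
      have hlin : HasDerivWithinAt (fun s : ℝ => b + c * s) c (Icc (0:ℝ) L) x := by
        simpa using (((hasDerivWithinAt_id x (Icc (0:ℝ) L)).const_mul c).const_add b)
      simpa using (hd2 x hx).fun_sub hlin
    intro s hs
    have := const_of_deriv_zero hL key s hs
    simp only [hb_def] at this ⊢
    linarith [this]
  -- Step 2: h s = a + b * s + c * s^2 / 2 on Icc
  have heq : ∀ s ∈ Icc (0:ℝ) L, h s = a + b * s + c * s ^ 2 / 2 := by
    have key : ∀ x ∈ Icc (0:ℝ) L,
        HasDerivWithinAt (fun s => h s - (a + b * s + c * s ^ 2 / 2)) 0 (Icc (0:ℝ) L) x := by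
      intro x hx
      have hq : HasDerivWithinAt (fun s : ℝ => a + b * s + c * s ^ 2 / 2)
          (b + c * x) (Icc (0:ℝ) L) x := by
        have hp : HasDerivWithinAt (fun s : ℝ => s ^ 2) (2 * x) (Icc (0:ℝ) L) x := by
          simpa using (hasDerivAt_pow 2 x).hasDerivWithinAt
        have := (((hasDerivWithinAt_id x (Icc (0:ℝ) L)).const_mul b).const_add a).fun_add
          ((hp.const_mul c).div_const 2)
        exact this.congr_deriv (by ring)
      have := (hd1 x hx).fun_sub hq
      rw [h'eq x hx] at this
      simpa using this
    intro s hs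
    have := const_of_deriv_zero hL key s hs
    simp only [ha_def, hb_def] at this ⊢
    nlinarith [this]
  -- Step 3: compute the integral
  have hE3 : a * L + b * L ^ 2 / 2 + c * L ^ 3 / 6 = 0 := by
    have hcongr : (∫ x in (0:ℝ)..L, h x) = ∫ x in (0:ℝ)..L, (a + b * x + c * x ^ 2 / 2) := by
      apply intervalIntegral.integral_congr
      intro x hx
      rw [uIcc_of_le hL.le] at hx
      exact heq x hx
    have hF : ∀ x : ℝ, HasDerivAt (fun x => a * x + b * (x ^ 2 / 2) + c * (x ^ 3 / 6))
        (a + b * x + c * x ^ 2 / 2) x := by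
      intro x
      have := (((hasDerivAt_id x).const_mul a).fun_add
        (((hasDerivAt_pow 2 x).div_const 2).const_mul b)).fun_add
        (((hasDerivAt_pow 3 x).div_const 6).const_mul c)
      exact this.congr_deriv (by ring)
    have hcont : Continuous (fun x : ℝ => a + b * x + c * x ^ 2 / 2) := by fun_prop
    have hval := intervalIntegral.integral_eq_sub_of_hasDerivAt
      (fun x _ => hF x) (hcont.intervalIntegrable 0 L)
    rw [hcongr, hval] at hmean
    nlinarith [hmean]
  -- Boundary condition equations
  have hE1 : b + ω₁ * a = 0 := by rw [hb0]; ring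
  have hE2 : b + c * L - ω₂ * (a + b * L + c * L ^ 2 / 2) = 0 := by
    have hLmem : L ∈ Icc (0:ℝ) L := ⟨hL.le, le_refl _⟩
    have e1 := h'eq L hLmem
    have e2 := heq L hLmem
    rw [e2] at hbL
    rw [e1] at hbL
    linarith [hbL]
  -- Linear algebra: a = b = c = 0
  have hK : (0:ℝ) < L ^ 2 * (1 - (ω₁ + ω₂) * L / 3 + ω₁ * ω₂ * L ^ 2 / 12) := by
    have hpq : 0 < ω₁ * ω₂ := mul_pos_of_neg_of_neg h1 h2
    have : 0 < 1 - (ω₁ + ω₂) * L / 3 + ω₁ * ω₂ * L ^ 2 / 12 := by nlinarith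
    positivity
  have ha : a = 0 := by
    have key : a * (L ^ 2 * (1 - (ω₁ + ω₂) * L / 3 + ω₁ * ω₂ * L ^ 2 / 12)) = 0 := by
      linear_combination (-((-(1 - ω₂ * L)) * (L ^ 3 / 6) + (L ^ 2 / 2) * (L * (1 - ω₂ * L / 2)))) * hE1
        + (-(L ^ 3 / 6)) * hE2 + (L * (1 - ω₂ * L / 2)) * hE3
    rcases mul_eq_zero.mp key with h' | h'
    · exact h'
    · exact absurd h' (ne_of_gt hK)
  have hb : b = 0 := by rw [ha] at hE1; linarith
  have hc : c = 0 := by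
    rw [ha, hb] at hE3
    have hL3 : (0:ℝ) < L ^ 3 := by positivity
    nlinarith
  intro s hs
  rw [heq s hs, ha, hb, hc]
  ring
end

section
/- Let l > 0. There exists δ > 0 such that for all κ ∈ ℝ with κ² < δ, all ω₁, ω₂ < δ, and every continuously differentiable, mean-value free ρ : [0,l] → ℝ, one has ∫₀^l ρ'(σ)² dσ − κ²·∫₀^l ρ(σ)² dσ − ω₁·ρ(0)² − ω₂·ρ(l)² ≥ 0. -/
open Set intervalIntegral MeasureTheory

/-- Cauchy–Schwarz for interval integrals of continuous functions. -/
lemma cs_interval (a b : ℝ) (hab : a ≤ b) (f : ℝ → ℝ) (hf : ContinuousOn f (Icc a b)) :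
    (∫ x in a..b, f x) ^ 2 ≤ (b - a) * ∫ x in a..b, (f x) ^ 2 := by
  rcases eq_or_lt_of_le hab with rfl | hab'
  · simp
  set I := ∫ x in a..b, f x with hI
  set c := I / (b - a) with hc
  have hf2 : ContinuousOn (fun x => (f x) ^ 2) (Icc a b) := hf.pow 2
  have hint1 : IntervalIntegrable f volume a b := hf.intervalIntegrable_of_Icc hab
  have hint2 : IntervalIntegrable (fun x => (f x) ^ 2) volume a b :=
    hf2.intervalIntegrable_of_Icc hab
  have key : 0 ≤ ∫ x in a..b, (f x - c) ^ 2 :=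
    intervalIntegral.integral_nonneg hab (fun x _ => sq_nonneg _)
  have expand : ∫ x in a..b, (f x - c) ^ 2
      = (∫ x in a..b, (f x) ^ 2) - (2 * c) * I + (b - a) * c ^ 2 := by
    have h1 : (∫ x in a..b, (f x - c) ^ 2)
        = ∫ x in a..b, ((f x) ^ 2 - (2 * c) * f x + c ^ 2) :=
      intervalIntegral.integral_congr (fun x _ => by ring)
    rw [h1, intervalIntegral.integral_add ((hint2).sub (hint1.const_mul (2 * c)))
      intervalIntegrable_const, intervalIntegral.integral_sub hint2 (hint1.const_mul (2 * c)),
      intervalIntegral.integral_const_mul, intervalIntegral.integral_const]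
    simp [smul_eq_mul]
    try ring
    exact Or.inl hI.symm
  have hcb : c * (b - a) = I := div_mul_cancel₀ _ (by linarith)
  nlinarith [key, expand, mul_le_mul_of_nonneg_left (key.trans_eq expand) (le_of_lt (sub_pos.2 hab')), sq_nonneg (I - c * (b - a))]

/-- A continuous mean-value free function on `[0,l]` vanishes somewhere. -/
lemma exists_zero_of_integral_zero (l : ℝ) (hl : 0 < l) (ρ : ℝ → ℝ)
    (hc : ContinuousOn ρ (Icc 0 l)) (hmean : (∫ σ in (0:ℝ)..l, ρ σ) = 0) :
    ∃ ξ ∈ Icc (0:ℝ) l, ρ ξ = 0 := by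
  by_contra h
  push_neg at h
  have h0 : (0:ℝ) ∈ Icc (0:ℝ) l := ⟨le_rfl, hl.le⟩
  have hint : IntervalIntegrable ρ volume 0 l := hc.intervalIntegrable_of_Icc hl.le
  have hsign : (∀ x ∈ Icc (0:ℝ) l, 0 < ρ x) ∨ (∀ x ∈ Icc (0:ℝ) l, ρ x < 0) := by
    rcases Ne.lt_or_gt (h 0 h0) with hneg | hpos
    · right
      intro x hx
      by_contra hxpos
      push_neg at hxpos
      have : (0:ℝ) ∈ Icc (ρ 0) (ρ x) := ⟨hneg.le, hxpos⟩
      obtain ⟨ξ, hξ, hξ0⟩ := (isPreconnected_Icc.intermediate_value h0 hx hc) this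
      exact h ξ hξ hξ0
    · left
      intro x hx
      by_contra hxneg
      push_neg at hxneg
      have : (0:ℝ) ∈ Icc (ρ x) (ρ 0) := ⟨hxneg, hpos.le⟩
      obtain ⟨ξ, hξ, hξ0⟩ := (isPreconnected_Icc.intermediate_value hx h0 hc) this
      exact h ξ hξ hξ0
  rcases hsign with hpos | hneg
  · have : 0 < ∫ σ in (0:ℝ)..l, ρ σ :=
      intervalIntegral_pos_of_pos_on hint (fun x hx => hpos x ⟨hx.1.le, hx.2.le⟩) hl
    linarith [hmean ▸ this]
  · have : 0 < ∫ σ in (0:ℝ)..l, -ρ σ :=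
      intervalIntegral_pos_of_pos_on hint.neg
        (fun x hx => neg_pos.2 (hneg x ⟨hx.1.le, hx.2.le⟩)) hl
    rw [intervalIntegral.integral_neg, hmean] at this
    simp at this

/-- Sub-interval Cauchy–Schwarz bound. -/
lemma sq_integral_le (l : ℝ) (hl : 0 < l) (a b : ℝ) (h0 : 0 ≤ a) (hab : a ≤ b) (hbl : b ≤ l)
    (f : ℝ → ℝ) (hf : ContinuousOn f (Icc 0 l)) :
    (∫ x in a..b, f x) ^ 2 ≤ l * ∫ x in (0:ℝ)..l, (f x) ^ 2 := by
  have h1 := cs_interval a b hab f (hf.mono (Icc_subset_Icc h0 hbl))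
  have h2 : (∫ x in a..b, (f x) ^ 2) ≤ ∫ x in (0:ℝ)..l, (f x) ^ 2 :=
    intervalIntegral.integral_mono_interval h0 hab hbl
      (Filter.Eventually.of_forall fun x => sq_nonneg _)
      ((hf.pow 2).intervalIntegrable_of_Icc hl.le)
  have h3 : 0 ≤ ∫ x in a..b, (f x) ^ 2 :=
    intervalIntegral.integral_nonneg hab fun x _ => sq_nonneg _
  calc (∫ x in a..b, f x) ^ 2 ≤ (b - a) * ∫ x in a..b, (f x) ^ 2 := h1
    _ ≤ l * ∫ x in (0:ℝ)..l, (f x) ^ 2 :=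
        mul_le_mul (by linarith) h2 h3 hl.le

/-- Pointwise Poincaré bound for a function vanishing at `ξ`. -/
lemma pointwise_bound (l : ℝ) (hl : 0 < l) (ρ ρ' : ℝ → ℝ)
    (hderiv : ∀ σ ∈ Icc (0:ℝ) l, HasDerivWithinAt ρ (ρ' σ) (Icc (0:ℝ) l) σ)
    (hc' : ContinuousOn ρ' (Icc (0:ℝ) l))
    (ξ : ℝ) (hξ : ξ ∈ Icc (0:ℝ) l) (hξ0 : ρ ξ = 0)
    (x : ℝ) (hx : x ∈ Icc (0:ℝ) l) :
    (ρ x) ^ 2 ≤ l * ∫ σ in (0:ℝ)..l, (ρ' σ) ^ 2 := by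
  have hcρ : ContinuousOn ρ (Icc 0 l) := fun σ hσ => (hderiv σ hσ).continuousWithinAt
  have husub : uIcc ξ x ⊆ Icc (0:ℝ) l := uIcc_subset_Icc hξ hx
  have hftc : (∫ σ in ξ..x, ρ' σ) = ρ x - ρ ξ := by
    apply intervalIntegral.integral_eq_sub_of_hasDeriv_right (hcρ.mono husub)
    · intro t ht
      have ht0 : 0 < t := lt_of_le_of_lt (le_min hξ.1 hx.1) ht.1
      have htl : t < l := lt_of_lt_of_le ht.2 (max_le hξ.2 hx.2)
      exact (hderiv t ⟨ht0.le, htl.le⟩).mono_of_mem_nhdsWithin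
        (mem_nhdsWithin_of_mem_nhds (Icc_mem_nhds ht0 htl))
    · exact (hc'.mono husub).intervalIntegrable
  rw [hξ0, sub_zero] at hftc
  rcases le_total ξ x with hle | hle
  · rw [← hftc]
    exact sq_integral_le l hl ξ x hξ.1 hle hx.2 ρ' hc'
  · have : ρ x = -(∫ σ in x..ξ, ρ' σ) := by
      rw [← hftc, intervalIntegral.integral_symm]
    rw [this, neg_pow]
    simpa using sq_integral_le l hl x ξ hx.1 hle hξ.2 ρ' hc'

/-- Coercivity estimate behind Theorem 5.1: for every `l > 0` there is `δ > 0` such that for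
all `κ` with `κ² < δ`, all `ω₁, ω₂ < δ`, and every continuously differentiable mean-value
free `ρ : [0,l] → ℝ`, `∫₀^l ρ'² − κ² ∫₀^l ρ² − ω₁ ρ(0)² − ω₂ ρ(l)² ≥ 0`. -/
theorem coercivity_curved (l : ℝ) (hl : 0 < l) :
    ∃ δ > (0:ℝ), ∀ κ ω₁ ω₂ : ℝ, κ ^ 2 < δ → ω₁ < δ → ω₂ < δ →
      ∀ ρ ρ' : ℝ → ℝ,
        (∀ σ ∈ Icc (0:ℝ) l, HasDerivWithinAt ρ (ρ' σ) (Icc (0:ℝ) l) σ) →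
        ContinuousOn ρ' (Icc (0:ℝ) l) →
        (∫ σ in (0:ℝ)..l, ρ σ) = 0 →
        (∫ σ in (0:ℝ)..l, (ρ' σ) ^ 2) - κ ^ 2 * (∫ σ in (0:ℝ)..l, (ρ σ) ^ 2)
          - ω₁ * (ρ 0) ^ 2 - ω₂ * (ρ l) ^ 2 ≥ 0 := by
  refine ⟨1 / (l + 1) ^ 2, by positivity, ?_⟩
  intro κ ω₁ ω₂ hκ hω₁ hω₂ ρ ρ' hderiv hc' hmean
  set δ : ℝ := 1 / (l + 1) ^ 2 with hδdef
  have hδ : 0 < δ := by positivity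
  have hcρ : ContinuousOn ρ (Icc 0 l) := fun σ hσ => (hderiv σ hσ).continuousWithinAt
  obtain ⟨ξ, hξ, hξ0⟩ := exists_zero_of_integral_zero l hl ρ hcρ hmean
  set J : ℝ := ∫ σ in (0:ℝ)..l, (ρ' σ) ^ 2 with hJdef
  set P : ℝ := ∫ σ in (0:ℝ)..l, (ρ σ) ^ 2 with hPdef
  have hJ : 0 ≤ J := intervalIntegral.integral_nonneg hl.le fun x _ => sq_nonneg _
  have hpb : ∀ x ∈ Icc (0:ℝ) l, (ρ x) ^ 2 ≤ l * J :=
    fun x hx => pointwise_bound l hl ρ ρ' hderiv hc' ξ hξ hξ0 x hx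
  have hP : P ≤ l ^ 2 * J := by
    have h1 : P ≤ ∫ _ in (0:ℝ)..l, l * J :=
      intervalIntegral.integral_mono_on hl.le
        ((hcρ.pow 2).intervalIntegrable_of_Icc hl.le) intervalIntegrable_const hpb
    have h2 : (∫ _ in (0:ℝ)..l, l * J) = l ^ 2 * J := by
      simp [intervalIntegral.integral_const, smul_eq_mul]; ring
    linarith
  have h0b : (ρ 0) ^ 2 ≤ l * J := hpb 0 ⟨le_rfl, hl.le⟩
  have hlb : (ρ l) ^ 2 ≤ l * J := hpb l ⟨hl.le, le_rfl⟩
  have hP0 : 0 ≤ P := intervalIntegral.integral_nonneg hl.le fun x _ => sq_nonneg _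
  have e1 : κ ^ 2 * P ≤ δ * (l ^ 2 * J) := mul_le_mul hκ.le hP hP0 hδ.le
  have e2 : ω₁ * (ρ 0) ^ 2 ≤ δ * (l * J) := mul_le_mul hω₁.le h0b (sq_nonneg _) hδ.le
  have e3 : ω₂ * (ρ l) ^ 2 ≤ δ * (l * J) := mul_le_mul hω₂.le hlb (sq_nonneg _) hδ.le
  have e4 : δ * (l ^ 2 * J) + δ * (l * J) + δ * (l * J) + δ * J = J := by
    rw [hδdef]
    field_simp
    ring
  have e5 : 0 ≤ δ * J := mul_nonneg hδ.le hJ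
  linarith
end

section
/- Let l > 0. There exists δ > 0 such that for all κ ∈ ℝ with κ² < δ and all ω₁, ω₂ < δ the following holds: if ρ : [0,l] → ℝ is twice continuously differentiable, ρ'' + κ²·ρ is constant on [0,l], ρ'(0) = −ω₁·ρ(0), ρ'(l) = ω₂·ρ(l), and ∫₀^l ρ(σ) dσ = 0, then ρ is identically zero. -/
open Set intervalIntegral

/-- Semi-simplicity (`N(A) = N(A²)`) for curved stationary solutions (Theorem 5.1): for every
`l > 0` there is `δ > 0` such that for all `κ` with `κ² < δ` and `ω₁, ω₂ < δ`, any twice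
continuously differentiable `ρ : [0,l] → ℝ` with `ρ'' + κ²ρ` constant, Robin boundary
conditions, and zero mean is identically zero. -/
theorem kernel_meets_meanfree_trivially_curved (l : ℝ) (hl : 0 < l) :
    ∃ δ > (0:ℝ), ∀ κ ω₁ ω₂ : ℝ, κ ^ 2 < δ → ω₁ < δ → ω₂ < δ →
      ∀ ρ ρ' : ℝ → ℝ, ∀ c : ℝ,
        (∀ σ ∈ Icc (0:ℝ) l, HasDerivWithinAt ρ (ρ' σ) (Icc (0:ℝ) l) σ) →
        (∀ σ ∈ Icc (0:ℝ) l, HasDerivWithinAt ρ' (c - κ ^ 2 * ρ σ) (Icc (0:ℝ) l) σ) →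
        ρ' 0 = -ω₁ * ρ 0 → ρ' l = ω₂ * ρ l →
        (∫ σ in (0:ℝ)..l, ρ σ) = 0 →
        ∀ σ ∈ Icc (0:ℝ) l, ρ σ = 0 := by
  have hden : 0 < 2 * (2 * l + l ^ 2) := by nlinarith [sq_nonneg l]
  refine ⟨1 / (2 * (2 * l + l ^ 2)), one_div_pos.2 hden, ?_⟩
  set δ := 1 / (2 * (2 * l + l ^ 2)) with hδdef
  have hδpos : 0 < δ := one_div_pos.2 hden
  have hδ1 : δ * (2 * (2 * l + l ^ 2)) = 1 := by
    rw [hδdef]; field_simp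
  intro κ ω₁ ω₂ hκ hω₁ hω₂ ρ ρ' c hρ hρ' hb0 hbl hmean
  have h0l : (0:ℝ) ∈ Icc (0:ℝ) l := ⟨le_rfl, hl.le⟩
  have hll : l ∈ Icc (0:ℝ) l := ⟨hl.le, le_rfl⟩
  have hρc : ContinuousOn ρ (Icc 0 l) := fun x hx => (hρ x hx).continuousWithinAt
  have hρ'c : ContinuousOn ρ' (Icc 0 l) := fun x hx => (hρ' x hx).continuousWithinAt
  have huIcc : uIcc (0:ℝ) l = Icc 0 l := uIcc_of_le hl.le
  have int_of_cont : ∀ {g : ℝ → ℝ}, ContinuousOn g (Icc 0 l) →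
      IntervalIntegrable g MeasureTheory.volume 0 l := by
    intro g h
    exact ContinuousOn.intervalIntegrable (by rwa [huIcc])
  set E := ∫ x in (0:ℝ)..l, ρ' x ^ 2 with hEdef
  set S := ∫ x in (0:ℝ)..l, ρ x ^ 2 with hSdef
  set I := ∫ x in (0:ℝ)..l, |ρ' x| with hIdef
  have hintρ := int_of_cont hρc
  have hintρ2 : IntervalIntegrable (fun x => ρ x ^ 2) MeasureTheory.volume 0 l := int_of_cont (hρc.pow 2)
  have hintρ'2 : IntervalIntegrable (fun x => ρ' x ^ 2) MeasureTheory.volume 0 l := int_of_cont (hρ'c.pow 2)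
  have hintρ'abs := int_of_cont hρ'c.abs
  have hE0 : 0 ≤ E := integral_nonneg hl.le fun u _ => sq_nonneg _
  have hS0 : 0 ≤ S := integral_nonneg hl.le fun u _ => sq_nonneg _
  have hI0 : 0 ≤ I := integral_nonneg hl.le fun u _ => abs_nonneg _
  -- Energy identity via integration by parts
  have hFTC : (∫ x in (0:ℝ)..l, (c * ρ x + (-(κ ^ 2) * ρ x ^ 2 + ρ' x ^ 2)))
      = ρ' l * ρ l - ρ' 0 * ρ 0 := by
    apply integral_eq_sub_of_hasDeriv_right_of_le hl.le (hρ'c.mul hρc)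
    · intro x hx
      have hxm : x ∈ Icc (0:ℝ) l := Ioo_subset_Icc_self hx
      have hnh : Icc (0:ℝ) l ∈ nhds x := Icc_mem_nhds hx.1 hx.2
      have h1 : HasDerivAt ρ (ρ' x) x := (hρ x hxm).hasDerivAt hnh
      have h2 : HasDerivAt ρ' (c - κ ^ 2 * ρ x) x := (hρ' x hxm).hasDerivAt hnh
      have h3 : HasDerivAt (fun y => ρ' y * ρ y)
          (c * ρ x + (-(κ ^ 2) * ρ x ^ 2 + ρ' x ^ 2)) x := by
        have := h2.mul h1
        exact this.congr_deriv (by ring)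
      exact h3.hasDerivWithinAt
    · apply int_of_cont
      exact (continuousOn_const.mul hρc).add
        (((continuousOn_const.mul (hρc.pow 2))).add (hρ'c.pow 2))
  have hE : E = ω₂ * ρ l ^ 2 + ω₁ * ρ 0 ^ 2 + κ ^ 2 * S := by
    rw [integral_add (hintρ.const_mul c) (((hintρ2.const_mul _)).add hintρ'2),
      integral_add (hintρ2.const_mul _) hintρ'2,
      integral_const_mul, integral_const_mul, hmean, hb0, hbl] at hFTC
    rw [← hSdef, ← hEdef] at hFTC
    linear_combination hFTC
  -- ρ vanishes somewhere (zero mean)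
  obtain ⟨σ₀, hσ₀, hρσ₀⟩ : ∃ σ₀ ∈ Icc (0:ℝ) l, ρ σ₀ = 0 := by
    by_contra hcon
    push_neg at hcon
    have hsign : (∀ x ∈ Ioo (0:ℝ) l, 0 < ρ x) ∨ (∀ x ∈ Ioo (0:ℝ) l, ρ x < 0) := by
      have hiv : ∀ x ∈ Icc (0:ℝ) l, ρ 0 < 0 → 0 ≤ ρ x → False := by
        intro x hx hneg hge
        have hsub : uIcc (0:ℝ) x ⊆ Icc 0 l := by
          rw [uIcc_of_le hx.1]; exact Icc_subset_Icc le_rfl hx.2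
        have hmem : (0:ℝ) ∈ uIcc (ρ 0) (ρ x) := mem_uIcc.2 (Or.inl ⟨hneg.le, hge⟩)
        obtain ⟨y, hy, hy0⟩ := intermediate_value_uIcc (hρc.mono hsub) hmem
        exact hcon y (hsub hy) hy0
      have hiv' : ∀ x ∈ Icc (0:ℝ) l, 0 < ρ 0 → ρ x ≤ 0 → False := by
        intro x hx hpos hle
        have hsub : uIcc (0:ℝ) x ⊆ Icc 0 l := by
          rw [uIcc_of_le hx.1]; exact Icc_subset_Icc le_rfl hx.2
        have hmem : (0:ℝ) ∈ uIcc (ρ 0) (ρ x) := mem_uIcc.2 (Or.inr ⟨hle, hpos.le⟩)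
        obtain ⟨y, hy, hy0⟩ := intermediate_value_uIcc (hρc.mono hsub) hmem
        exact hcon y (hsub hy) hy0
      rcases Ne.lt_or_gt (hcon 0 h0l) with hneg | hpos
      · right; intro x hx
        by_contra hge
        push_neg at hge
        exact hiv x (Ioo_subset_Icc_self hx) hneg hge
      · left; intro x hx
        by_contra hle
        push_neg at hle
        exact hiv' x (Ioo_subset_Icc_self hx) hpos hle
    rcases hsign with hpos | hneg
    · have := intervalIntegral_pos_of_pos_on hintρ hpos hl
      rw [hmean] at this
      exact lt_irrefl 0 this
    · have : 0 < ∫ x in (0:ℝ)..l, -ρ x :=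
        intervalIntegral_pos_of_pos_on hintρ.neg (fun x hx => neg_pos.2 (hneg x hx)) hl
      rw [integral_neg, hmean, neg_zero] at this
      exact lt_irrefl 0 this
  -- fundamental theorem of calculus on subintervals
  have hFTC2 : ∀ a b : ℝ, a ∈ Icc (0:ℝ) l → b ∈ Icc (0:ℝ) l → a ≤ b →
      (∫ x in a..b, ρ' x) = ρ b - ρ a := by
    intro a b ha hb hab
    have hsub : Icc a b ⊆ Icc (0:ℝ) l := Icc_subset_Icc ha.1 hb.2
    apply integral_eq_sub_of_hasDeriv_right_of_le hab (hρc.mono hsub)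
    · intro x hx
      have hxm : x ∈ Icc (0:ℝ) l := ⟨ha.1.trans hx.1.le, hx.2.le.trans hb.2⟩
      have hnh : Icc (0:ℝ) l ∈ nhds x :=
        Icc_mem_nhds (lt_of_le_of_lt ha.1 hx.1) (lt_of_lt_of_le hx.2 hb.2)
      exact ((hρ x hxm).hasDerivAt hnh).hasDerivWithinAt
    · exact ContinuousOn.intervalIntegrable
        (hρ'c.mono (by rw [uIcc_of_le hab]; exact hsub))
  -- pointwise bound via the zero of ρ
  have habs : ∀ σ ∈ Icc (0:ℝ) l, |ρ σ| ≤ I := by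
    intro σ hσ
    have hmono : ∀ a b : ℝ, a ∈ Icc (0:ℝ) l → b ∈ Icc (0:ℝ) l → a ≤ b →
        (∫ x in a..b, |ρ' x|) ≤ I := by
      intro a b ha hb hab
      exact integral_mono_interval ha.1 hab hb.2
        (Filter.Eventually.of_forall fun x => abs_nonneg _) hintρ'abs
    rcases le_total σ₀ σ with h | h
    · have heq := hFTC2 σ₀ σ hσ₀ hσ h
      rw [hρσ₀, sub_zero] at heq
      calc |ρ σ| = |∫ x in σ₀..σ, ρ' x| := by rw [heq]
        _ ≤ ∫ x in σ₀..σ, |ρ' x| := abs_integral_le_integral_abs h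
        _ ≤ I := hmono σ₀ σ hσ₀ hσ h
    · have heq := hFTC2 σ σ₀ hσ hσ₀ h
      rw [hρσ₀, zero_sub] at heq
      have : ρ σ = -∫ x in σ..σ₀, ρ' x := by rw [heq, neg_neg]
      calc |ρ σ| = |∫ x in σ..σ₀, ρ' x| := by rw [this, abs_neg]
        _ ≤ ∫ x in σ..σ₀, |ρ' x| := abs_integral_le_integral_abs h
        _ ≤ I := hmono σ σ₀ hσ hσ₀ h
  -- Young's inequality trick: I² ≤ l·E
  have hIt : ∀ t : ℝ, 0 < t → I ≤ E / (2 * t) + t * l / 2 := by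
    intro t ht
    have hptw : ∀ x ∈ Icc (0:ℝ) l, |ρ' x| ≤ ρ' x ^ 2 / (2 * t) + t / 2 := by
      intro x _
      have key : 2 * t * |ρ' x| ≤ ρ' x ^ 2 + t ^ 2 := by
        nlinarith [sq_nonneg (|ρ' x| - t), sq_abs (ρ' x)]
      have h2t : (0:ℝ) < 2 * t := by linarith
      rw [div_add' _ _ _ h2t.ne']
      rw [le_div_iff₀ h2t]
      nlinarith [key]
    have hle : I ≤ ∫ x in (0:ℝ)..l, (ρ' x ^ 2 / (2 * t) + t / 2) := by
      apply integral_mono_on hl.le hintρ'abs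
        ((hintρ'2.div_const _).add intervalIntegrable_const) hptw
    calc I ≤ ∫ x in (0:ℝ)..l, (ρ' x ^ 2 / (2 * t) + t / 2) := hle
      _ = E / (2 * t) + t * l / 2 := by
        rw [integral_add (hintρ'2.div_const _) intervalIntegrable_const,
          integral_div, integral_const, ← hEdef]
        simp
        ring
  have hIE : I ^ 2 ≤ l * E := by
    rcases eq_or_lt_of_le hI0 with h0 | hIpos
    · rw [← h0]
      simpa using mul_nonneg hl.le hE0
    · have ht := hIt (I / l) (div_pos hIpos hl)
      have hlne : l ≠ 0 := hl.ne'
      have hIne : I ≠ 0 := hIpos.ne'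
      have hmul : I * (2 * (I / l)) ≤ (E / (2 * (I / l)) + (I / l) * l / 2) * (2 * (I / l)) :=
        mul_le_mul_of_nonneg_right ht (by positivity)
      have hsimp : (E / (2 * (I / l)) + (I / l) * l / 2) * (2 * (I / l)) = E + (I / l) ^ 2 * l := by
        field_simp
      rw [hsimp] at hmul
      have hu : I / l * l = I := div_mul_cancel₀ I hlne
      have hu2 : (I / l) ^ 2 * l = (I / l) * I := by rw [sq, mul_assoc, hu]
      rw [hu2] at hmul
      have h3 : (I / l) * I ≤ E := by linarith
      have h4 : l * ((I / l) * I) ≤ l * E := mul_le_mul_of_nonneg_left h3 hl.le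
      calc I ^ 2 = l * ((I / l) * I) := by field_simp
        _ ≤ l * E := h4
  have hpt : ∀ σ ∈ Icc (0:ℝ) l, ρ σ ^ 2 ≤ l * E := by
    intro σ hσ
    have h := habs σ hσ
    nlinarith [abs_nonneg (ρ σ), sq_abs (ρ σ), hIE]
  -- bound S
  have hSbound : S ≤ l * (l * E) := by
    calc S ≤ ∫ _x in (0:ℝ)..l, l * E :=
        integral_mono_on hl.le hintρ2 intervalIntegrable_const hpt
      _ = l * (l * E) := by rw [integral_const]; simp
  -- conclude E = 0
  have A0 : ρ 0 ^ 2 ≤ l * E := hpt 0 h0l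
  have A1 : ρ l ^ 2 ≤ l * E := hpt l hll
  have t1 : ω₂ * ρ l ^ 2 ≤ δ * (l * E) :=
    le_trans (mul_le_mul_of_nonneg_right hω₂.le (sq_nonneg _))
      (mul_le_mul_of_nonneg_left A1 hδpos.le)
  have t2 : ω₁ * ρ 0 ^ 2 ≤ δ * (l * E) :=
    le_trans (mul_le_mul_of_nonneg_right hω₁.le (sq_nonneg _))
      (mul_le_mul_of_nonneg_left A0 hδpos.le)
  have t3 : κ ^ 2 * S ≤ δ * (l * (l * E)) :=
    le_trans (mul_le_mul_of_nonneg_right hκ.le hS0)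
      (mul_le_mul_of_nonneg_left hSbound hδpos.le)
  have hEle : E ≤ δ * (2 * l + l ^ 2) * E := by
    calc E = ω₂ * ρ l ^ 2 + ω₁ * ρ 0 ^ 2 + κ ^ 2 * S := hE
      _ ≤ δ * (l * E) + δ * (l * E) + δ * (l * (l * E)) := by linarith
      _ = δ * (2 * l + l ^ 2) * E := by ring
  have hhalf : δ * (2 * l + l ^ 2) = 1 / 2 := by linarith [hδ1]
  rw [hhalf] at hEle
  have hEzero : E = 0 := le_antisymm (by linarith) hE0
  intro σ hσ
  have hb := hpt σ hσ
  rw [hEzero, mul_zero] at hb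
  have : ρ σ ^ 2 = 0 := le_antisymm hb (sq_nonneg _)
  exact (pow_eq_zero_iff two_ne_zero).mp this
end

section
/- Let l > 0, ω ∈ ℝ and κ ∈ ℝ satisfy 2/l − ω − κ²·l/6 < 0. Then there exists a Lipschitz continuous function g : [0,l] → ℝ, differentiable on (0,l) except at finitely many points, with ∫₀^l g(σ) dσ = 0, g(0) = 1, g(l) = −1, one-sided derivatives g'(0⁺) = −ω·g(0) and g'(l⁻) = ω·g(l), such that ∫₀^l g'(σ)² dσ − ω·g(0)² − ω·g(l)² − κ²·∫₀^l g(σ)² dσ < 0. -/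
open Set intervalIntegral
open scoped Interval

private lemma affine_hasDerivAt (a b x : ℝ) : HasDerivAt (fun y => a + b * y) b x := by
  simpa using ((hasDerivAt_id x).const_mul b).const_add a

private lemma affine_lip (a b : ℝ) : LipschitzWith ‖b‖₊ (fun x : ℝ => a + b * x) := by
  apply LipschitzWith.of_dist_le_mul
  intro x y
  have h : (a + b * x) - (a + b * y) = b * (x - y) := by ring
  rw [Real.dist_eq, Real.dist_eq, h, abs_mul]
  rw [coe_nnnorm, Real.norm_eq_abs]

private lemma lipOn_weaken {K K' : NNReal} {f : ℝ → ℝ} {s : Set ℝ}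
    (h : LipschitzOnWith K f s) (hK : K ≤ K') : LipschitzOnWith K' f s := by
  intro x hx y hy
  exact le_trans (h hx hy) (mul_le_mul_left (ENNReal.coe_le_coe.mpr hK) _)

private lemma lipOn_of_eqOn {K : NNReal} {f g : ℝ → ℝ} {s : Set ℝ}
    (h : LipschitzOnWith K f s) (he : EqOn f g s) : LipschitzOnWith K g s := by
  intro x hx y hy
  rw [← he hx, ← he hy]
  exact h hx hy

private lemma lip_glue_aux {K : NNReal} {f : ℝ → ℝ} {a b c : ℝ}
    (h1 : LipschitzOnWith K f (Icc a b)) (h2 : LipschitzOnWith K f (Icc b c))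
    (hab : a ≤ b) (hbc : b ≤ c) {x y : ℝ} (hx : x ∈ Icc a c) (hy : y ∈ Icc a c)
    (hxy : x ≤ y) : dist (f x) (f y) ≤ K * dist x y := by
  rw [lipschitzOnWith_iff_dist_le_mul] at h1 h2
  rcases le_total y b with hyb | hby
  · exact h1 x ⟨hx.1, le_trans hxy hyb⟩ y ⟨hy.1, hyb⟩
  rcases le_total b x with hbx | hxb
  · exact h2 x ⟨hbx, hx.2⟩ y ⟨hby, hy.2⟩
  calc dist (f x) (f y) ≤ dist (f x) (f b) + dist (f b) (f y) := dist_triangle _ _ _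
    _ ≤ K * dist x b + K * dist b y :=
        add_le_add (h1 x ⟨hx.1, hxb⟩ b ⟨hab, le_refl b⟩) (h2 b ⟨le_refl b, hbc⟩ y ⟨hby, hy.2⟩)
    _ = K * dist x y := by
        rw [Real.dist_eq, Real.dist_eq, Real.dist_eq, abs_of_nonpos (by linarith),
          abs_of_nonpos (by linarith), abs_of_nonpos (by linarith)]
        ring

private lemma lip_glue {K : NNReal} {f : ℝ → ℝ} {a b c : ℝ}
    (h1 : LipschitzOnWith K f (Icc a b)) (h2 : LipschitzOnWith K f (Icc b c))
    (hab : a ≤ b) (hbc : b ≤ c) : LipschitzOnWith K f (Icc a c) := by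
  rw [lipschitzOnWith_iff_dist_le_mul]
  intro x hx y hy
  rcases le_total x y with hxy | hyx
  · exact lip_glue_aux h1 h2 hab hbc hx hy hxy
  · rw [dist_comm (f x) (f y), dist_comm x y]
    exact lip_glue_aux h1 h2 hab hbc hy hx hyx

private lemma integral_affine (a b p q : ℝ) :
    (∫ x in p..q, (a + b * x)) = a * (q - p) + b * (q ^ 2 - p ^ 2) / 2 := by
  rw [intervalIntegral.integral_add (intervalIntegrable_const)
      ((show Continuous fun x : ℝ => b * x from continuous_const.mul continuous_id').intervalIntegrable _ _),
    intervalIntegral.integral_const, intervalIntegral.integral_const_mul, integral_id]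
  simp [smul_eq_mul]
  ring

private lemma integral_affine_sq (a b p q : ℝ) :
    (∫ x in p..q, (a + b * x) ^ 2)
      = a ^ 2 * (q - p) + a * b * (q ^ 2 - p ^ 2) + b ^ 2 * (q ^ 3 - p ^ 3) / 3 := by
  have h : ∀ x : ℝ, (a + b * x) ^ 2 = a ^ 2 + 2 * a * b * x + b ^ 2 * x ^ 2 := by
    intro x; ring
  simp_rw [h]
  rw [intervalIntegral.integral_add
      (intervalIntegrable_const.add ((show Continuous fun x : ℝ => 2 * a * b * x from
        continuous_const.mul continuous_id').intervalIntegrable _ _))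
      ((show Continuous fun x : ℝ => b ^ 2 * x ^ 2 from
        continuous_const.mul (continuous_pow 2)).intervalIntegrable _ _),
    intervalIntegral.integral_add (intervalIntegrable_const)
      ((show Continuous fun x : ℝ => 2 * a * b * x from
        continuous_const.mul continuous_id').intervalIntegrable _ _),
    intervalIntegral.integral_const, intervalIntegral.integral_const_mul,
    intervalIntegral.integral_const_mul, integral_id, integral_pow]
  push_cast
  simp [smul_eq_mul]
  ring

private lemma ae_nmem_finset (T : Finset ℝ) : ∀ᵐ x : ℝ, x ∉ (T : Set ℝ) := by
  refine MeasureTheory.measure_eq_zero_iff_ae_notMem.mp ?_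
  exact (T.finite_toSet).measure_zero _

private lemma intervalIntegrable_of_ae_finset (f : ℝ → ℝ) (c a b : ℝ) (T : Finset ℝ)
    (h : ∀ x ∈ Ι a b, x ∉ (T : Set ℝ) → f x = c) :
    IntervalIntegrable f MeasureTheory.volume a b := by
  rw [intervalIntegrable_iff]
  have hae : ∀ᵐ x ∂(MeasureTheory.volume.restrict (Ι a b)), f x = c := by
    refine (MeasureTheory.ae_restrict_iff' measurableSet_uIoc).mpr ?_
    filter_upwards [ae_nmem_finset T] with x hx hxI
    exact h x hxI hx
  exact (MeasureTheory.integrableOn_const measure_Ioc_lt_top.ne).congr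
    (Filter.EventuallyEq.symm hae)

private lemma integral_const_of_ae_finset (f : ℝ → ℝ) (c a b : ℝ) (T : Finset ℝ)
    (h : ∀ x ∈ Ι a b, x ∉ (T : Set ℝ) → f x = c) :
    (∫ x in a..b, f x) = (b - a) * c := by
  have hae : ∀ᵐ x ∂(MeasureTheory.volume), x ∈ Ι a b → f x = c := by
    filter_upwards [ae_nmem_finset T] with x hx hxI
    exact h x hxI hx
  rw [intervalIntegral.integral_congr_ae hae, intervalIntegral.integral_const, smul_eq_mul]

set_option maxHeartbeats 1600000 in
/-- Claim (5.9) of the paper (equal Robin weights): if `2/l − ω − κ² l/6 < 0` there is a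
mean-value free Lipschitz test function `g` on `[0,l]` with `g(0) = 1`, `g(l) = −1`,
satisfying the linearized Robin boundary conditions, such that
`∫₀^l g'² − ω g(0)² − ω g(l)² − κ² ∫₀^l g² < 0`. -/
theorem negative_quadratic_form_curved (l ω κ : ℝ) (hl : 0 < l)
    (hneg : 2 / l - ω - κ ^ 2 * l / 6 < 0) :
    ∃ g : ℝ → ℝ, ∃ S : Finset ℝ,
      (∃ K : NNReal, LipschitzOnWith K g (Icc (0:ℝ) l)) ∧
      (∀ σ ∈ Ioo (0:ℝ) l, σ ∉ S → DifferentiableAt ℝ g σ) ∧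
      (∫ σ in (0:ℝ)..l, g σ) = 0 ∧ g 0 = 1 ∧ g l = -1 ∧
      HasDerivWithinAt g (-(ω * g 0)) (Ici (0:ℝ)) 0 ∧
      HasDerivWithinAt g (ω * g l) (Iic l) l ∧
      (∫ σ in (0:ℝ)..l, (deriv g σ) ^ 2) - ω * (g 0) ^ 2 - ω * (g l) ^ 2
        - κ ^ 2 * (∫ σ in (0:ℝ)..l, (g σ) ^ 2) < 0 := by
  have hl' : l ≠ 0 := ne_of_gt hl
  -- the quadratic form as a function of the boundary-layer width
  set F : ℝ → ℝ := fun e => 2 * ω ^ 2 * e + 4 * (1 - ω * e) ^ 2 / (l - 2 * e) - 2 * ω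
      - κ ^ 2 * ((1 - ω * e) ^ 2 * (l - 2 * e) / 3
        + 2 * (e - ω * e ^ 2 + ω ^ 2 * e ^ 3 / 3)) with hF
  have hF0 : F 0 < 0 := by
    have h : F 0 = 2 * (2 / l - ω - κ ^ 2 * l / 6) := by
      rw [hF]; simp only [mul_zero, sub_zero, zero_pow two_ne_zero]; field_simp; ring
    rw [h]; linarith
  have hFc : ContinuousAt F 0 := by
    have h1 : ContinuousAt (fun e : ℝ => 4 * (1 - ω * e) ^ 2 / (l - 2 * e)) 0 := by
      apply ContinuousAt.div (by fun_prop) (by fun_prop)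
      simpa using hl'
    exact (((by fun_prop : ContinuousAt (fun e : ℝ => 2 * ω ^ 2 * e) 0).add h1).sub
      continuousAt_const).sub (by fun_prop)
  have h1 : ∀ᶠ e in nhds (0:ℝ), F e < 0 := hFc (Iio_mem_nhds hF0)
  have h2 : ∀ᶠ e in nhds (0:ℝ), e < l / 2 := eventually_lt_nhds (by linarith)
  obtain ⟨ε, ⟨hFε, hεhalf⟩, hε⟩ :=
    (((h1.and h2).filter_mono nhdsWithin_le_nhds).and
      (self_mem_nhdsWithin (s := Ioi (0:ℝ)))).exists
  have hd : (0:ℝ) < l - 2 * ε := by linarith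
  have hd' : l - 2 * ε ≠ 0 := ne_of_gt hd
  have hd'' : l - ε * 2 ≠ 0 := by rwa [mul_comm]
  have hεle : ε < l - ε := by linarith
  set m : ℝ := -2 * (1 - ω * ε) / (l - 2 * ε) with hm
  set a2 : ℝ := (1 - ω * ε) - m * ε with ha2
  set g : ℝ → ℝ := fun σ =>
    if σ ≤ ε then 1 + (-ω) * σ
    else if σ ≤ l - ε then a2 + m * σ
    else (ω * l - 1) + (-ω) * σ with hgdef
  -- matching values at the junctions
  have match2 : a2 + m * ε = 1 + (-ω) * ε := by rw [ha2]; ring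
  have match3 : (1 + (-ω) * ε) = a2 + m * ε := match2.symm
  have match4 : a2 + m * (l - ε) = (ω * l - 1) + (-ω) * (l - ε) := by
    rw [ha2, hm]; field_simp; ring
  -- piecewise description of g
  have hEq1 : EqOn g (fun σ => 1 + (-ω) * σ) (Icc 0 ε) := by
    intro x hx; simp only [hgdef, if_pos hx.2]
  have hEq2 : EqOn g (fun σ => a2 + m * σ) (Icc ε (l - ε)) := by
    intro x hx
    by_cases h : x ≤ ε
    · have hxε : x = ε := le_antisymm h hx.1
      subst hxε
      simp only [hgdef]
      rw [if_pos (le_refl x)]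
      exact match3
    · simp only [hgdef, if_neg h, if_pos hx.2]
  have hEq3 : EqOn g (fun σ => (ω * l - 1) + (-ω) * σ) (Icc (l - ε) l) := by
    intro x hx
    have hx1 : ¬ x ≤ ε := by
      have := hx.1; simp only [not_le]; linarith
    by_cases h : x ≤ l - ε
    · have hxe : x = l - ε := le_antisymm h hx.1
      subst hxe
      simp only [hgdef]
      rw [if_neg hx1, if_pos (le_refl (l - ε))]
      exact match4
    · simp only [hgdef, if_neg hx1, if_neg h]
  -- boundary values
  have hg0 : g 0 = 1 := by
    simp only [hgdef, if_pos hε.le]; ring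
  have hgl : g l = -1 := by
    have hx1 : ¬ l ≤ ε := by simp only [not_le]; linarith
    have hx2 : ¬ l ≤ l - ε := by simp only [not_le]; linarith
    simp only [hgdef, if_neg hx1, if_neg hx2]; ring
  -- Lipschitz continuity
  have hK1 : ‖(-ω)‖₊ ≤ ‖(-ω)‖₊ + ‖m‖₊ := le_self_add
  have hK2 : ‖m‖₊ ≤ ‖(-ω)‖₊ + ‖m‖₊ := le_add_self
  have lip1 : LipschitzOnWith (‖(-ω)‖₊ + ‖m‖₊) g (Icc 0 ε) :=
    lipOn_of_eqOn (lipOn_weaken ((affine_lip 1 (-ω)).lipschitzOnWith) hK1) hEq1.symm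
  have lip2 : LipschitzOnWith (‖(-ω)‖₊ + ‖m‖₊) g (Icc ε (l - ε)) :=
    lipOn_of_eqOn (lipOn_weaken ((affine_lip a2 m).lipschitzOnWith) hK2) hEq2.symm
  have lip3 : LipschitzOnWith (‖(-ω)‖₊ + ‖m‖₊) g (Icc (l - ε) l) :=
    lipOn_of_eqOn (lipOn_weaken ((affine_lip (ω * l - 1) (-ω)).lipschitzOnWith) hK1) hEq3.symm
  have hlip : LipschitzOnWith (‖(-ω)‖₊ + ‖m‖₊) g (Icc 0 l) :=
    lip_glue (lip_glue lip1 lip2 hε.le hεle.le) lip3 (by linarith) (by linarith)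
  have hcont : ContinuousOn g (Icc 0 l) := hlip.continuousOn
  -- interval-integrability of g and g² on the pieces
  have hsub1 : uIcc (0:ℝ) ε ⊆ Icc 0 l := by
    rw [uIcc_of_le hε.le]; exact Icc_subset_Icc le_rfl (by linarith)
  have hsub2 : uIcc ε (l - ε) ⊆ Icc 0 l := by
    rw [uIcc_of_le hεle.le]; exact Icc_subset_Icc hε.le (by linarith)
  have hsub3 : uIcc (l - ε) l ⊆ Icc 0 l := by
    rw [uIcc_of_le (by linarith)]; exact Icc_subset_Icc (by linarith) le_rfl
  have hi1 : IntervalIntegrable g MeasureTheory.volume 0 ε :=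
    (hcont.mono hsub1).intervalIntegrable
  have hi2 : IntervalIntegrable g MeasureTheory.volume ε (l - ε) :=
    (hcont.mono hsub2).intervalIntegrable
  have hi3 : IntervalIntegrable g MeasureTheory.volume (l - ε) l :=
    (hcont.mono hsub3).intervalIntegrable
  have hsq : ContinuousOn (fun σ => (g σ) ^ 2) (Icc 0 l) := hcont.pow 2
  have hi1s : IntervalIntegrable (fun σ => (g σ) ^ 2) MeasureTheory.volume 0 ε :=
    (hsq.mono hsub1).intervalIntegrable
  have hi2s : IntervalIntegrable (fun σ => (g σ) ^ 2) MeasureTheory.volume ε (l - ε) :=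
    (hsq.mono hsub2).intervalIntegrable
  have hi3s : IntervalIntegrable (fun σ => (g σ) ^ 2) MeasureTheory.volume (l - ε) l :=
    (hsq.mono hsub3).intervalIntegrable
  -- values of the integrals of g on the pieces
  have hint1 : (∫ x in (0:ℝ)..ε, g x) = 1 * (ε - 0) + (-ω) * (ε ^ 2 - 0 ^ 2) / 2 := by
    rw [intervalIntegral.integral_congr (by rwa [uIcc_of_le hε.le] :
      EqOn g (fun σ => 1 + (-ω) * σ) (uIcc 0 ε))]
    exact integral_affine 1 (-ω) 0 ε
  have hint2 : (∫ x in ε..(l - ε), g x)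
      = a2 * ((l - ε) - ε) + m * ((l - ε) ^ 2 - ε ^ 2) / 2 := by
    rw [intervalIntegral.integral_congr (by rwa [uIcc_of_le hεle.le] :
      EqOn g (fun σ => a2 + m * σ) (uIcc ε (l - ε)))]
    exact integral_affine a2 m ε (l - ε)
  have hint3 : (∫ x in (l - ε)..l, g x)
      = (ω * l - 1) * (l - (l - ε)) + (-ω) * (l ^ 2 - (l - ε) ^ 2) / 2 := by
    rw [intervalIntegral.integral_congr (by rwa [uIcc_of_le (by linarith : l - ε ≤ l)] :
      EqOn g (fun σ => (ω * l - 1) + (-ω) * σ) (uIcc (l - ε) l))]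
    exact integral_affine (ω * l - 1) (-ω) (l - ε) l
  -- values of the integrals of g² on the pieces
  have hsq1 : EqOn (fun σ => (g σ) ^ 2) (fun σ => (1 + (-ω) * σ) ^ 2) (uIcc 0 ε) := by
    rw [uIcc_of_le hε.le]; intro x hx; simp only [hEq1 hx]
  have hsq2 : EqOn (fun σ => (g σ) ^ 2) (fun σ => (a2 + m * σ) ^ 2) (uIcc ε (l - ε)) := by
    rw [uIcc_of_le hεle.le]; intro x hx; simp only [hEq2 hx]
  have hsq3 : EqOn (fun σ => (g σ) ^ 2) (fun σ => ((ω * l - 1) + (-ω) * σ) ^ 2)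
      (uIcc (l - ε) l) := by
    rw [uIcc_of_le (by linarith : l - ε ≤ l)]; intro x hx; simp only [hEq3 hx]
  have hints1 : (∫ x in (0:ℝ)..ε, (g x) ^ 2)
      = 1 ^ 2 * (ε - 0) + 1 * (-ω) * (ε ^ 2 - 0 ^ 2) + (-ω) ^ 2 * (ε ^ 3 - 0 ^ 3) / 3 := by
    rw [intervalIntegral.integral_congr hsq1]; exact integral_affine_sq 1 (-ω) 0 ε
  have hints2 : (∫ x in ε..(l - ε), (g x) ^ 2)
      = a2 ^ 2 * ((l - ε) - ε) + a2 * m * ((l - ε) ^ 2 - ε ^ 2)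
        + m ^ 2 * ((l - ε) ^ 3 - ε ^ 3) / 3 := by
    rw [intervalIntegral.integral_congr hsq2]; exact integral_affine_sq a2 m ε (l - ε)
  have hints3 : (∫ x in (l - ε)..l, (g x) ^ 2)
      = (ω * l - 1) ^ 2 * (l - (l - ε)) + (ω * l - 1) * (-ω) * (l ^ 2 - (l - ε) ^ 2)
        + (-ω) ^ 2 * (l ^ 3 - (l - ε) ^ 3) / 3 := by
    rw [intervalIntegral.integral_congr hsq3]; exact integral_affine_sq (ω * l - 1) (-ω) (l - ε) l
  -- splitting of the full integrals
  have hsplitg : (∫ σ in (0:ℝ)..l, g σ)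
      = ((∫ x in (0:ℝ)..ε, g x) + ∫ x in ε..(l - ε), g x) + ∫ x in (l - ε)..l, g x := by
    rw [intervalIntegral.integral_add_adjacent_intervals hi1 hi2,
      intervalIntegral.integral_add_adjacent_intervals (hi1.trans hi2) hi3]
  have hsplitgs : (∫ σ in (0:ℝ)..l, (g σ) ^ 2)
      = ((∫ x in (0:ℝ)..ε, (g x) ^ 2) + ∫ x in ε..(l - ε), (g x) ^ 2)
        + ∫ x in (l - ε)..l, (g x) ^ 2 := by
    rw [intervalIntegral.integral_add_adjacent_intervals hi1s hi2s,
      intervalIntegral.integral_add_adjacent_intervals (hi1s.trans hi2s) hi3s]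
  -- mean value zero
  have hmean : (∫ σ in (0:ℝ)..l, g σ) = 0 := by
    rw [hsplitg, hint1, hint2, hint3, ha2, hm]
    field_simp
    ring
  -- derivative of g away from the junctions
  have hT : ∀ x : ℝ, x ∉ (({ε, l - ε} : Finset ℝ) : Set ℝ) → x ≠ ε ∧ x ≠ l - ε := by
    intro x hx
    simp only [Finset.coe_insert, Finset.coe_singleton, mem_insert_iff, mem_singleton_iff,
      not_or] at hx
    exact hx
  have hder1 : ∀ x : ℝ, x < ε → deriv g x = -ω := by
    intro x hx
    have hev : g =ᶠ[nhds x] (fun y => 1 + (-ω) * y) := by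
      filter_upwards [eventually_lt_nhds hx] with y hy
      simp only [hgdef, if_pos hy.le]
    rw [hev.deriv_eq, (affine_hasDerivAt 1 (-ω) x).deriv]
  have hder2 : ∀ x : ℝ, ε < x → x < l - ε → deriv g x = m := by
    intro x hx1 hx2
    have hev : g =ᶠ[nhds x] (fun y => a2 + m * y) := by
      filter_upwards [(eventually_gt_nhds hx1).and (eventually_lt_nhds hx2)] with y hy
      simp only [hgdef, if_neg (not_le.mpr hy.1), if_pos hy.2.le]
    rw [hev.deriv_eq, (affine_hasDerivAt a2 m x).deriv]
  have hder3 : ∀ x : ℝ, l - ε < x → deriv g x = -ω := by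
    intro x hx
    have hev : g =ᶠ[nhds x] (fun y => (ω * l - 1) + (-ω) * y) := by
      filter_upwards [eventually_gt_nhds hx] with y hy
      have h1 : ¬ y ≤ ε := by simp only [not_le]; linarith
      have h2 : ¬ y ≤ l - ε := not_le.mpr hy
      simp only [hgdef, if_neg h1, if_neg h2]
    rw [hev.deriv_eq, (affine_hasDerivAt (ω * l - 1) (-ω) x).deriv]
  -- integral of (deriv g)² on the pieces
  have hd1 : ∀ x ∈ Ι (0:ℝ) ε, x ∉ (({ε, l - ε} : Finset ℝ) : Set ℝ) →
      (deriv g x) ^ 2 = ω ^ 2 := by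
    intro x hx hxT
    rw [uIoc_of_le hε.le] at hx
    have hlt : x < ε := lt_of_le_of_ne hx.2 (hT x hxT).1
    rw [hder1 x hlt]; ring
  have hd2 : ∀ x ∈ Ι ε (l - ε), x ∉ (({ε, l - ε} : Finset ℝ) : Set ℝ) →
      (deriv g x) ^ 2 = m ^ 2 := by
    intro x hx hxT
    rw [uIoc_of_le hεle.le] at hx
    have hlt : x < l - ε := lt_of_le_of_ne hx.2 (hT x hxT).2
    rw [hder2 x hx.1 hlt]
  have hd3 : ∀ x ∈ Ι (l - ε) l, x ∉ (({ε, l - ε} : Finset ℝ) : Set ℝ) →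
      (deriv g x) ^ 2 = ω ^ 2 := by
    intro x hx _
    rw [uIoc_of_le (by linarith : l - ε ≤ l)] at hx
    rw [hder3 x hx.1]; ring
  have hdi1 := intervalIntegrable_of_ae_finset (fun x => (deriv g x) ^ 2) (ω ^ 2) 0 ε _ hd1
  have hdi2 := intervalIntegrable_of_ae_finset (fun x => (deriv g x) ^ 2) (m ^ 2) ε (l - ε) _ hd2
  have hdi3 := intervalIntegrable_of_ae_finset (fun x => (deriv g x) ^ 2) (ω ^ 2) (l - ε) l _ hd3
  have hdint1 := integral_const_of_ae_finset (fun x => (deriv g x) ^ 2) (ω ^ 2) 0 ε _ hd1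
  have hdint2 := integral_const_of_ae_finset (fun x => (deriv g x) ^ 2) (m ^ 2) ε (l - ε) _ hd2
  have hdint3 := integral_const_of_ae_finset (fun x => (deriv g x) ^ 2) (ω ^ 2) (l - ε) l _ hd3
  have hsplitd : (∫ σ in (0:ℝ)..l, (deriv g σ) ^ 2)
      = ((∫ x in (0:ℝ)..ε, (deriv g x) ^ 2) + ∫ x in ε..(l - ε), (deriv g x) ^ 2)
        + ∫ x in (l - ε)..l, (deriv g x) ^ 2 := by
    rw [intervalIntegral.integral_add_adjacent_intervals hdi1 hdi2,
      intervalIntegral.integral_add_adjacent_intervals (hdi1.trans hdi2) hdi3]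
  refine ⟨g, {ε, l - ε}, ⟨‖(-ω)‖₊ + ‖m‖₊, hlip⟩, ?_, hmean, hg0, hgl, ?_, ?_, ?_⟩
  · -- differentiability away from the junctions
    intro σ hσ hσS
    have hσ' : σ ≠ ε ∧ σ ≠ l - ε := by
      refine hT σ ?_
      simpa using hσS
    rcases lt_or_gt_of_ne hσ'.1 with h | h
    · have hev : g =ᶠ[nhds σ] (fun y => 1 + (-ω) * y) := by
        filter_upwards [eventually_lt_nhds h] with y hy
        simp only [hgdef, if_pos hy.le]
      exact hev.differentiableAt_iff.mpr (affine_hasDerivAt 1 (-ω) σ).differentiableAt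
    · rcases lt_or_gt_of_ne hσ'.2 with h2 | h2
      · have hev : g =ᶠ[nhds σ] (fun y => a2 + m * y) := by
          filter_upwards [(eventually_gt_nhds h).and (eventually_lt_nhds h2)] with y hy
          simp only [hgdef, if_neg (not_le.mpr hy.1), if_pos hy.2.le]
        exact hev.differentiableAt_iff.mpr (affine_hasDerivAt a2 m σ).differentiableAt
      · have hev : g =ᶠ[nhds σ] (fun y => (ω * l - 1) + (-ω) * y) := by
          filter_upwards [eventually_gt_nhds h2] with y hy
          have hy1 : ¬ y ≤ ε := by simp only [not_le]; linarith
          have hy2 : ¬ y ≤ l - ε := not_le.mpr hy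
          simp only [hgdef, if_neg hy1, if_neg hy2]
        exact hev.differentiableAt_iff.mpr
          (affine_hasDerivAt (ω * l - 1) (-ω) σ).differentiableAt
  · -- Robin condition at 0
    rw [hg0, mul_one]
    refine ((affine_hasDerivAt 1 (-ω) 0).hasDerivWithinAt).congr_of_eventuallyEq ?_ ?_
    · filter_upwards [(eventually_lt_nhds hε).filter_mono nhdsWithin_le_nhds] with y hy
      simp only [hgdef, if_pos hy.le]
    · simp only [hgdef, if_pos hε.le]
  · -- Robin condition at l
    rw [hgl, mul_neg_one]
    refine ((affine_hasDerivAt (ω * l - 1) (-ω) l).hasDerivWithinAt).congr_of_eventuallyEq ?_ ?_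
    · filter_upwards [(eventually_gt_nhds (show l - ε < l by linarith)).filter_mono
        nhdsWithin_le_nhds] with y hy
      have hy1 : ¬ y ≤ ε := by simp only [not_le]; linarith
      have hy2 : ¬ y ≤ l - ε := not_le.mpr hy
      simp only [hgdef, if_neg hy1, if_neg hy2]
    · have hy1 : ¬ l ≤ ε := by simp only [not_le]; linarith
      have hy2 : ¬ l ≤ l - ε := by simp only [not_le]; linarith
      simp only [hgdef, if_neg hy1, if_neg hy2]
  · -- the quadratic form is negative
    rw [hsplitd, hdint1, hdint2, hdint3, hg0, hgl, hsplitgs, hints1, hints2, hints3]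
    have hFε' : 2 * ω ^ 2 * ε + 4 * (1 - ω * ε) ^ 2 / (l - 2 * ε) - 2 * ω
        - κ ^ 2 * ((1 - ω * ε) ^ 2 * (l - 2 * ε) / 3
          + 2 * (ε - ω * ε ^ 2 + ω ^ 2 * ε ^ 3 / 3)) < 0 := hFε
    have key : (ε - 0) * ω ^ 2 + ((l - ε) - ε) * m ^ 2 + (l - (l - ε)) * ω ^ 2
        - ω * (1:ℝ) ^ 2 - ω * (-1:ℝ) ^ 2
        - κ ^ 2 * ((1 ^ 2 * (ε - 0) + 1 * (-ω) * (ε ^ 2 - 0 ^ 2) + (-ω) ^ 2 * (ε ^ 3 - 0 ^ 3) / 3)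
          + (a2 ^ 2 * ((l - ε) - ε) + a2 * m * ((l - ε) ^ 2 - ε ^ 2)
            + m ^ 2 * ((l - ε) ^ 3 - ε ^ 3) / 3)
          + ((ω * l - 1) ^ 2 * (l - (l - ε)) + (ω * l - 1) * (-ω) * (l ^ 2 - (l - ε) ^ 2)
            + (-ω) ^ 2 * (l ^ 3 - (l - ε) ^ 3) / 3))
        = 2 * ω ^ 2 * ε + 4 * (1 - ω * ε) ^ 2 / (l - 2 * ε) - 2 * ω
          - κ ^ 2 * ((1 - ω * ε) ^ 2 * (l - 2 * ε) / 3
            + 2 * (ε - ω * ε ^ 2 + ω ^ 2 * ε ^ 3 / 3)) := by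
      rw [ha2, hm]
      field_simp
      ring
    linarith [key, hFε']
end
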